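/- Let k and N > 1 be integers. Suppose the complete graph K_N is factorable into spanning subgraphs H₁,…,H_k, where for each i ∈ {1,…,k}, H_i is isomorphic to the disjoint union of r_i copies of K_{q_i+1} and n_i − r_i copies of K_{q_i}, for non-negative integers n_i, q_i, r_i satisfying N = n_i q_i + r_i and 0 ≤ r_i < n_i. Assume further that (n_i − r_i − 1)·q_i > 0 for some i ∈ {1,…,k}. Then R̄(n₁+1, n₂+1, …, n_k+1) = N+1. -/

import Mathlib

open Finset

/-- The color-`i` graph `f⁻¹(i)` of an edge `k`-coloring `f` of the complete
graph on `Fin n`. -/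
def colorGraph {n k : ℕ} (f : Sym2 (Fin n) → Fin k) (i : Fin k) :
    SimpleGraph (Fin n) where
  Adj x y := x ≠ y ∧ f s(x, y) = i
  symm := by
    refine ⟨?_⟩
    rintro x y ⟨hxy, hf⟩
    exact ⟨hxy.symm, by rwa [Sym2.eq_swap]⟩
  loopless := by refine ⟨?_⟩; rintro x ⟨h, -⟩; exact h rfl

/-- `α_i(f) ≥ m` : the graph `f⁻¹(i)` has an independent set of size `m`. -/
def HasIndep {n k : ℕ} (f : Sym2 (Fin n) → Fin k) (i : Fin k) (m : ℕ) : Prop :=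
  ∃ s : Finset (Fin n), s.card = m ∧ ∀ x ∈ s, ∀ y ∈ s, x ≠ y → f s(x, y) ≠ i

/-- `ω_i(f) ≥ m` : the graph `f⁻¹(i)` has a clique of size `m`. -/
def HasClique {n k : ℕ} (f : Sym2 (Fin n) → Fin k) (i : Fin k) (m : ℕ) : Prop :=
  ∃ s : Finset (Fin n), s.card = m ∧ ∀ x ∈ s, ∀ y ∈ s, x ≠ y → f s(x, y) = i

/-- The complementary Ramsey number `R̄(m 0, …, m (k-1))`: the least `n` such
that every edge `k`-coloring of `K_n` admits a color `i` with `α_i(f) ≥ m i`. -/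
noncomputable def cRamsey {k : ℕ} (m : Fin k → ℕ) : ℕ :=
  sInf {n : ℕ | ∀ f : Sym2 (Fin n) → Fin k, ∃ i : Fin k, HasIndep f i (m i)}

/-- `R̄(m; k)`, i.e. `R̄(m, …, m)` with `m` repeated `k` times. -/
noncomputable def cRamseyU (m k : ℕ) : ℕ := cRamsey (fun _ : Fin k => m)

/-- The classical multicolor Ramsey number `R(m 0, …, m (k-1))`. -/
noncomputable def ramsey {k : ℕ} (m : Fin k → ℕ) : ℕ :=
  sInf {n : ℕ | ∀ f : Sym2 (Fin n) → Fin k, ∃ i : Fin k, HasClique f i (m i)}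

/-- `G` is the disjoint union of `r` copies of `K_{q+1}` and `n - r` copies of
`K_q`: there is a partition of the vertices into `n` parts, `r` of size `q+1`
and `n - r` of size `q`, with two vertices adjacent iff they are distinct and
lie in a common part. -/
def IsCliquePartition {N : ℕ} (G : SimpleGraph (Fin N)) (n q r : ℕ) : Prop :=
  ∃ P : Fin N → Fin n,
    (∀ x y, G.Adj x y ↔ x ≠ y ∧ P x = P y) ∧
    ∀ j : Fin n,
      (Finset.univ.filter (fun x => P x = j)).card = if (j : ℕ) < r then q + 1 else q

/-- The family `H` of spanning subgraphs is a factorization of the complete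
graph: every edge of `K_N` lies in exactly one of the `H i`. -/
def IsFactorization {N k : ℕ} (H : Fin k → SimpleGraph (Fin N)) : Prop :=
  ∀ x y : Fin N, x ≠ y → ∃! i : Fin k, (H i).Adj x y

/-- `f_i(x)`: the number of vertices `y ≠ x` with `f({x, y}) = i`. -/
def degColor {n k : ℕ} (f : Sym2 (Fin n) → Fin k) (i : Fin k) (x : Fin n) : ℕ :=
  (Finset.univ.filter (fun y => y ≠ x ∧ f s(x, y) = i)).card

/-- `t̄_n(m)`: the number of edges of `T̄_n(m) = r K_{q+1} ∪ (n-r) K_q`, where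
`m = n * q + r` with `0 ≤ r < n`. -/
def tbar (n m : ℕ) : ℕ :=
  (m % n) * Nat.choose (m / n + 1) 2 + (n - m % n) * Nat.choose (m / n) 2

/-!
Colour each edge of `K_N` by the factor `H_i` containing it. Any `n_i + 1` vertices contain two
in the same clique of `H_i`, so this colouring has no independent set of size `n_i + 1` in colour
`i`, and `R̄(n₁ + 1, …, n_k + 1) > N`.

Conversely, suppose a colouring of `K_{N+1}` has `α_i ≤ n_i` for every `i`. The complement of
colour class `i` is `K_{n_i+1}`-free, so by Turán's theorem colour `i` has at least
`t̄_{n_i}(N+1) = t̄_{n_i}(N) + q_i` edges. As `H_i` has exactly `t̄_{n_i}(N)` edges and the `H_i`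
factor `K_N`, the colouring has at least `C(N,2) + Σ q_i` edges. Counting the edges of the `H_i`
once more, `N Σ q_i = N (N - 1) + Σ (n_i - r_i) q_i > N (N - 1) + Σ q_i`, whence `Σ q_i > N`:
more than the `C(N+1,2) = C(N,2) + N` edges of `K_{N+1}`.
-/

open SimpleGraph

theorem Nat.choose_two_succ (q : ℕ) : (q + 1).choose 2 = q.choose 2 + q := by
  rw [Nat.choose_succ_succ', Nat.choose_one_right, add_comm]

theorem Nat.two_mul_choose_two_add_self (q : ℕ) : 2 * q.choose 2 + q = q * q := by
  rw [Nat.choose_two_right, Nat.mul_div_cancel' (Nat.even_mul_pred_self q).two_dvd]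
  cases q <;> simp [Nat.mul_succ]

theorem Fin.sum_ite_val_lt {M : Type*} [AddCommMonoid M] {n r : ℕ} (hr : r ≤ n) (a b : M) :
    ∑ j : Fin n, (if (j : ℕ) < r then a else b) = r • a + (n - r) • b := by
  rw [Fin.sum_univ_eq_sum_range (fun j => if j < r then a else b), ← sum_range_add_sum_Ico _ hr,
    sum_congr rfl fun j hj => if_pos (mem_range.mp hj),
    sum_congr rfl fun j hj => if_neg (mem_Ico.mp hj).1.not_gt, Finset.sum_const,
    Finset.sum_const, card_range, Nat.card_Ico]

section Graph

variable {V : Type*} [Fintype V] [DecidableEq V]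

theorem SimpleGraph.card_edgeFinset_add_card_edgeFinset_compl (G : SimpleGraph V)
    [DecidableRel G.Adj] : #G.edgeFinset + #Gᶜ.edgeFinset = (Fintype.card V).choose 2 := by
  rw [← card_edgeFinset_top_eq_card_choose_two, ← card_union_of_disjoint
    (disjoint_edgeFinset.mpr disjoint_compl_right), ← edgeFinset_sup,
    edgeFinset_inj.mpr sup_compl_eq_top]

theorem SimpleGraph.card_edgeFinset_eq_sum_choose_two {ι : Type*} [Fintype ι] [DecidableEq ι]
    {G : SimpleGraph V} [DecidableRel G.Adj] (P : V → ι)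
    (hG : ∀ x y, G.Adj x y ↔ x ≠ y ∧ P x = P y) :
    #G.edgeFinset = ∑ j, (#{x | P x = j}).choose 2 := by
  have hdegree : ∀ x, G.degree x = #{y | P y = P x} - 1 := by
    intro x
    rw [← card_neighborFinset_eq_degree, ← card_erase_of_mem (s := {y | P y = P x}) (a := x)
      (by simp)]
    congr 1
    ext y
    simp [hG, and_comm, eq_comm]
  rw [← Nat.mul_right_inj two_ne_zero, ← sum_degrees_eq_twice_card_edges, mul_sum,
    ← sum_fiberwise univ P]
  refine sum_congr rfl fun j _ => ?_
  rw [sum_congr rfl fun x hx => by rw [hdegree, (mem_filter.mp hx).2], sum_const, smul_eq_mul,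
    Nat.mul_sub_one, ← Nat.two_mul_choose_two_add_self, Nat.add_sub_cancel]

end Graph

section CliquePartition

variable {N n q r : ℕ} {G : SimpleGraph (Fin N)}

theorem IsCliquePartition.card_edgeFinset [DecidableRel G.Adj]
    (hG : IsCliquePartition G n q r) (hr : r ≤ n) :
    #G.edgeFinset = r * (q + 1).choose 2 + (n - r) * q.choose 2 := by
  obtain ⟨P, hadj, hcard⟩ := hG
  simp_rw [card_edgeFinset_eq_sum_choose_two P hadj, hcard, apply_ite (Nat.choose · 2)]
  rw [Fin.sum_ite_val_lt hr, smul_eq_mul, smul_eq_mul]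

theorem IsCliquePartition.cliqueFree_compl (hG : IsCliquePartition G n q r) :
    Gᶜ.CliqueFree (n + 1) := by
  obtain ⟨P, hadj, -⟩ := hG
  intro s hs
  obtain ⟨x, hx, y, hy, hxy, hP⟩ := exists_ne_map_eq_of_card_lt_of_maps_to (s := s) (t := univ)
    (by simp [hs.card_eq]) (f := P) fun _ _ => mem_coe.2 (mem_univ _)
  exact (hs.isClique hx hy hxy).2 ((hadj x y).2 ⟨hxy, hP⟩)

end CliquePartition

theorem isCliquePartition_compl_turanGraph {M n : ℕ} (hn : 0 < n) :
    IsCliquePartition (turanGraph M n)ᶜ n (M / n) (M % n) := by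
  refine ⟨fun x => ⟨x % n, Nat.mod_lt _ hn⟩, fun x y => ?_, fun j => ?_⟩
  · simp [turanGraph_adj, Fin.ext_iff]
  · have hcount := Nat.count_modEq_card (b := M) hn j
    rw [Nat.count_eq_card_filter_range, Nat.mod_eq_of_lt j.2, ← Nat.Iio_eq_range,
      ← Fin.map_valEmbedding_univ, filter_map, card_map] at hcount
    convert hcount using 2
    · ext x
      simp [Fin.ext_iff, Nat.ModEq, Nat.mod_eq_of_lt j.2]
    · split_ifs <;> rfl

theorem tbar_mul_add {n q r : ℕ} (hr : r < n) :
    tbar n (n * q + r) = r * (q + 1).choose 2 + (n - r) * q.choose 2 := by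
  rw [tbar, Nat.mul_add_div (by omega), Nat.div_eq_of_lt hr, Nat.mul_add_mod,
    Nat.mod_eq_of_lt hr, add_zero]

theorem tbar_succ {n : ℕ} (hn : 0 < n) (m : ℕ) : tbar n (m + 1) = tbar n m + m / n := by
  obtain ⟨q, r, hr, rfl⟩ : ∃ q r, r < n ∧ m = n * q + r :=
    ⟨m / n, m % n, Nat.mod_lt _ hn, (Nat.div_add_mod m n).symm⟩
  rw [tbar_mul_add hr, Nat.mul_add_div hn, Nat.div_eq_of_lt hr, add_zero]
  rcases (show r + 1 ≤ n from hr).lt_or_eq with hlt | rfl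
  · rw [add_assoc, tbar_mul_add hlt, Nat.choose_two_succ,
      show n - r = n - (r + 1) + 1 by omega]
    ring
  · rw [show (r + 1) * q + r + 1 = (r + 1) * (q + 1) + 0 by ring, tbar_mul_add hn,
      Nat.add_sub_cancel_left, Nat.sub_zero, Nat.choose_two_succ, Nat.choose_two_succ]
    ring

theorem card_edgeFinset_turanGraph_add_tbar {M n : ℕ} (hn : 0 < n) :
    #(turanGraph M n).edgeFinset + tbar n M = M.choose 2 := by
  have h := card_edgeFinset_add_card_edgeFinset_compl (turanGraph M n)
  rwa [(isCliquePartition_compl_turanGraph hn).card_edgeFinset (Nat.mod_lt _ hn).le,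
    Fintype.card_fin] at h

section Coloring

variable {M k : ℕ} (f : Sym2 (Fin M) → Fin k) (i : Fin k)

instance : DecidableRel (colorGraph f i).Adj :=
  fun x y => inferInstanceAs (Decidable (x ≠ y ∧ f s(x, y) = i))

theorem hasIndep_iff_not_cliqueFree_compl (m : ℕ) :
    HasIndep f i m ↔ ¬(colorGraph f i)ᶜ.CliqueFree m := by
  simp only [CliqueFree, not_forall, not_not, isNClique_iff, isClique_iff, Set.Pairwise,
    mem_coe, compl_adj, colorGraph, HasIndep]
  exact exists_congr fun s =>
    ⟨fun ⟨hs, h⟩ => ⟨fun x hx y hy hxy => ⟨hxy, fun h' => h x hx y hy hxy h'.2⟩, hs⟩,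
      fun ⟨h, hs⟩ => ⟨hs, fun x hx y hy hxy hf => (h hx hy hxy).2 ⟨hxy, hf⟩⟩⟩

theorem sum_card_edgeFinset_colorGraph : ∑ i, #(colorGraph f i).edgeFinset = M.choose 2 := by
  have htop := card_edgeFinset_top_eq_card_choose_two (V := Fin M)
  rw [Fintype.card_fin, card_eq_sum_card_fiberwise (f := f) (t := univ)
    fun _ _ => mem_coe.2 (mem_univ _)] at htop
  rw [← htop]
  refine sum_congr rfl fun i _ => congrArg card ?_
  ext e
  induction e using Sym2.ind
  simp only [mem_filter, mem_edgeFinset, mem_edgeSet, top_adj]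
  rfl

variable {f i} in
theorem tbar_le_card_edgeFinset_colorGraph {m : ℕ} (hm : 0 < m) (h : ¬HasIndep f i (m + 1)) :
    tbar m M ≤ #(colorGraph f i).edgeFinset := by
  rw [hasIndep_iff_not_cliqueFree_compl, not_not] at h
  have hturan := (isTuranMaximal_turanGraph (n := M) hm).2 h
  have hcolor := card_edgeFinset_add_card_edgeFinset_compl (colorGraph f i)
  rw [Fintype.card_fin] at hcolor
  have := card_edgeFinset_turanGraph_add_tbar (M := M) hm
  omega

end Coloring

theorem HasIndep.of_map {M N k m : ℕ} {f : Sym2 (Fin N) → Fin k} {i : Fin k}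
    (e : Fin M ↪ Fin N) (h : HasIndep (fun s => f (s.map e)) i m) : HasIndep f i m := by
  obtain ⟨s, hs, hind⟩ := h
  refine ⟨s.map e, by rw [card_map, hs], ?_⟩
  simp only [mem_map]
  rintro _ ⟨x, hx, rfl⟩ _ ⟨y, hy, rfl⟩ hxy
  simpa using hind x hx y hy (e.injective.ne_iff.mp hxy)

theorem cRamsey_eq_succ {k N : ℕ} {m : Fin k → ℕ}
    (hgood : ∀ f : Sym2 (Fin (N + 1)) → Fin k, ∃ i, HasIndep f i (m i))
    (hbad : ∃ f : Sym2 (Fin N) → Fin k, ∀ i, ¬HasIndep f i (m i)) :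
    cRamsey m = N + 1 := by
  obtain ⟨f, hf⟩ := hbad
  refine le_antisymm (Nat.sInf_le hgood) (le_csInf ⟨N + 1, hgood⟩ fun M hM => ?_)
  by_contra! hlt
  obtain ⟨i, hi⟩ := hM fun s => f (s.map (Fin.castLEEmb (Nat.le_of_lt_succ hlt)))
  exact hf i (hi.of_map _)

theorem IsFactorization.exists_colorGraph_eq {N k : ℕ} {H : Fin k → SimpleGraph (Fin N)}
    (hH : IsFactorization H) (hk : 0 < k) :
    ∃ c : Sym2 (Fin N) → Fin k, ∀ i, colorGraph c i = H i := by
  classical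
  refine ⟨fun e => if h : ∃ i, e ∈ (H i).edgeSet then h.choose else ⟨0, hk⟩,
    fun i => ?_⟩
  ext x y
  change x ≠ y ∧ _ = i ↔ _
  beta_reduce
  constructor
  · rintro ⟨hxy, hc⟩
    obtain ⟨j, hj, -⟩ := hH x y hxy
    have h : ∃ i, s(x, y) ∈ (H i).edgeSet := ⟨j, hj⟩
    rw [dif_pos h] at hc
    exact hc ▸ h.choose_spec
  · intro hadj
    have h : ∃ i, s(x, y) ∈ (H i).edgeSet := ⟨i, hadj⟩
    obtain ⟨j, -, hj⟩ := hH x y hadj.ne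
    exact ⟨hadj.ne, by rw [dif_pos h, hj _ h.choose_spec, hj i hadj]⟩

theorem two_mul_tbar_add_sub_mul {n q r : ℕ} (hr : r < n) :
    2 * tbar n (n * q + r) + (n - r) * q = (n * q + r) * q := by
  obtain ⟨d, rfl⟩ : ∃ d, n = r + 1 + d := ⟨n - (r + 1), by omega⟩
  rw [tbar_mul_add hr, show r + 1 + d - r = d + 1 by omega, Nat.choose_two_succ]
  have := Nat.two_mul_choose_two_add_self q
  nlinarith

theorem lt_sum_of_sum_tbar_eq_choose_two {k N : ℕ} {n q r : Fin k → ℕ} (hN : 1 < N)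
    (hN' : ∀ i, N = n i * q i + r i) (hr : ∀ i, r i < n i)
    (hpos : ∃ i, 0 < (n i - r i - 1) * q i) (hedges : ∑ i, tbar (n i) N = N.choose 2) :
    N < ∑ i, q i := by
  have hcount : 2 * N.choose 2 + ∑ i, (n i - r i) * q i = N * ∑ i, q i := by
    rw [← hedges, mul_sum, mul_sum, ← sum_add_distrib]
    exact sum_congr rfl fun i _ => by rw [hN' i, two_mul_tbar_add_sub_mul (hr i)]
  have hdefect : ∑ i, q i < ∑ i, (n i - r i) * q i := by
    obtain ⟨j, hj⟩ := hpos
    refine sum_lt_sum (fun i _ => Nat.le_mul_of_pos_left _ (Nat.sub_pos_of_lt (hr i)))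
      ⟨j, mem_univ j, ?_⟩
    rw [show n j - r j = n j - r j - 1 + 1 by have := hr j; omega, add_one_mul]
    omega
  have := Nat.two_mul_choose_two_add_self N
  nlinarith

/-- If `K_N` is factorable into `H₁, …, H_k` with
`H_i ≅ r_i K_{q_i + 1} ∪ (n_i - r_i) K_{q_i}`, `N = n_i q_i + r_i`,
`0 ≤ r_i < n_i`, and `(n_i - r_i - 1) q_i > 0` for some `i`, then
`R̄(n₁ + 1, …, n_k + 1) = N + 1`. -/
theorem cRamsey_eq_of_cliquePartition_factorization (N k : ℕ) (hN : 1 < N)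
    (hk : 0 < k) (H : Fin k → SimpleGraph (Fin N)) (n q r : Fin k → ℕ)
    (hfac : IsFactorization H)
    (hiso : ∀ i, IsCliquePartition (H i) (n i) (q i) (r i))
    (hN' : ∀ i, N = n i * q i + r i) (hr : ∀ i, r i < n i)
    (hpos : ∃ i, 0 < (n i - r i - 1) * q i) :
    cRamsey (fun i => n i + 1) = N + 1 := by
  obtain ⟨c, hc⟩ := hfac.exists_colorGraph_eq hk
  simp only [← hc] at hiso
  have hn : ∀ i, 0 < n i := fun i => (Nat.zero_le _).trans_lt (hr i)
  refine cRamsey_eq_succ (fun f => ?_) ⟨c, fun i => ?_⟩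
  · by_contra! hf
    have hedges : ∑ i, tbar (n i) N = N.choose 2 := by
      rw [← sum_card_edgeFinset_colorGraph c]
      exact sum_congr rfl fun i _ => by
        rw [(hiso i).card_edgeFinset (hr i).le, ← tbar_mul_add (hr i), ← hN' i]
    have hgrowth : ∀ i, tbar (n i) (N + 1) = tbar (n i) N + q i := fun i => by
      rw [tbar_succ (hn i), add_right_inj, hN' i, Nat.mul_add_div (hn i),
        Nat.div_eq_of_lt (hr i), add_zero]
    have hturan := sum_le_sum fun i (_ : i ∈ univ) =>
      tbar_le_card_edgeFinset_colorGraph (hn i) (hf i)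
    rw [sum_congr rfl fun i _ => hgrowth i, sum_add_distrib, hedges,
      sum_card_edgeFinset_colorGraph, Nat.choose_two_succ] at hturan
    have := lt_sum_of_sum_tbar_eq_choose_two hN hN' hr hpos hedges
    omega
  · rw [hasIndep_iff_not_cliqueFree_compl, not_not]
    exact (hiso i).cliqueFree_compl
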